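/- Suppose ρμ₂ ≤ μ₁ (this covers all −1 < ρ < 1 when μ₁ = μ₂, and ρ ≤ μ₁/μ₂ when μ₁ < μ₂). Then g(t,s) = g₃(t,s) for all (t,s) ∈ (0,∞)²; that is, the constrained infimum defining g is attained at the corner point (1+μ₁t, 1+μ₂s). -/

import Mathlib

open Matrix

/-- The covariance matrix of `(X₁(t), X₂(s))`. -/
noncomputable def covM (ρ t s : ℝ) : Matrix (Fin 2) (Fin 2) ℝ :=
  !![t, ρ * min t s; ρ * min t s, s]

/-- The quadratic form `(x,y) Σ_{ts}⁻¹ (x,y)ᵀ`. -/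
noncomputable def quadF (ρ t s x y : ℝ) : ℝ :=
  dotProduct ![x, y] ((covM ρ t s)⁻¹.mulVec ![x, y])

/-- `g(t,s) = inf{ (x,y) Σ_{ts}⁻¹ (x,y)ᵀ : x ≥ 1+μ₁t, y ≥ 1+μ₂s }`. -/
noncomputable def gFun (μ₁ μ₂ ρ t s : ℝ) : ℝ :=
  sInf { q : ℝ | ∃ x y : ℝ, 1 + μ₁ * t ≤ x ∧ 1 + μ₂ * s ≤ y ∧ q = quadF ρ t s x y }

/-- `g₃(t,s)`: the quadratic form at the corner point `(1+μ₁t, 1+μ₂s)`. -/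
noncomputable def g3Fun (μ₁ μ₂ ρ t s : ℝ) : ℝ :=
  quadF ρ t s (1 + μ₁ * t) (1 + μ₂ * s)

/-
Writing `c = ρ min(t,s)`, the quadratic form is `(s x² - 2cxy + t y²) / (ts - c²)` with positive
denominator. Its gradient at the corner `(a, b) = (1 + μ₁t, 1 + μ₂s)` is proportional to
`(sa - cb, tb - ca)`, and `ρμ₂ ≤ μ₁` is what makes both entries nonnegative. A positive definite
form lies above its tangent plane, so moving from the corner into the quadrant `x ≥ a, y ≥ b`
can only increase it.
-/

lemma quadF_eq (ρ t s x y : ℝ) :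
    quadF ρ t s x y =
      (s * x ^ 2 - 2 * (ρ * min t s) * x * y + t * y ^ 2) / (t * s - (ρ * min t s) ^ 2) := by
  rw [quadF, inv_def]
  simp only [covM, adjugate_fin_two_of, det_fin_two_of, Ring.inverse_eq_inv', smul_of, mulVec,
    dotProduct, Fin.sum_univ_two, cons_val_zero, cons_val_one, of_apply, cons_val', smul_eq_mul,
    smul_cons, smul_empty]
  rw [div_eq_mul_inv]
  ring

lemma sq_mul_min_lt_mul {ρ t s : ℝ} (hρl : -1 < ρ) (hρu : ρ < 1) (ht : 0 < t) (hs : 0 < s) :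
    (ρ * min t s) ^ 2 < t * s := by
  have hm : 0 < min t s := lt_min ht hs
  have hρ2 : ρ ^ 2 < 1 := by nlinarith
  have hm2 : min t s ^ 2 ≤ t * s := by
    rw [sq]
    exact mul_le_mul (min_le_left t s) (min_le_right t s) hm.le ht.le
  calc (ρ * min t s) ^ 2 = ρ ^ 2 * min t s ^ 2 := mul_pow ρ _ 2
    _ < 1 * min t s ^ 2 := by gcongr
    _ ≤ t * s := by rwa [one_mul]

lemma binary_form_nonneg {s c t : ℝ} (hs : 0 < s) (hD : c ^ 2 ≤ t * s) (u v : ℝ) :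
    0 ≤ s * u ^ 2 - 2 * c * u * v + t * v ^ 2 := by
  have key : s * (s * u ^ 2 - 2 * c * u * v + t * v ^ 2) =
      (s * u - c * v) ^ 2 + (t * s - c ^ 2) * v ^ 2 := by ring
  have : 0 ≤ s * (s * u ^ 2 - 2 * c * u * v + t * v ^ 2) := by
    rw [key]
    exact add_nonneg (sq_nonneg _) (mul_nonneg (sub_nonneg.2 hD) (sq_nonneg v))
  exact (mul_nonneg_iff_of_pos_left hs).1 this

lemma binary_form_le_of_corner {s c t a b x y : ℝ} (hs : 0 < s) (hD : c ^ 2 ≤ t * s)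
    (hgrad₁ : 0 ≤ s * a - c * b) (hgrad₂ : 0 ≤ t * b - c * a) (hx : a ≤ x) (hy : b ≤ y) :
    s * a ^ 2 - 2 * c * a * b + t * b ^ 2 ≤ s * x ^ 2 - 2 * c * x * y + t * y ^ 2 := by
  have expand : s * x ^ 2 - 2 * c * x * y + t * y ^ 2 =
      (s * a ^ 2 - 2 * c * a * b + t * b ^ 2) + 2 * (x - a) * (s * a - c * b)
        + 2 * (y - b) * (t * b - c * a)
        + (s * (x - a) ^ 2 - 2 * c * (x - a) * (y - b) + t * (y - b) ^ 2) := by ring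
  rw [expand]
  have h₁ := mul_nonneg (mul_nonneg zero_le_two (sub_nonneg.2 hx)) hgrad₁
  have h₂ := mul_nonneg (mul_nonneg zero_le_two (sub_nonneg.2 hy)) hgrad₂
  linarith [binary_form_nonneg hs hD (x - a) (y - b)]

section Corner

variable {μ₁ μ₂ ρ t s : ℝ}

lemma corner_grad_fst_nonneg (hμ₁ : 0 ≤ μ₁) (hρu : ρ ≤ 1) (hρμ : ρ * μ₂ ≤ μ₁)
    (ht : 0 ≤ t) (hs : 0 ≤ s) :
    0 ≤ s * (1 + μ₁ * t) - ρ * min t s * (1 + μ₂ * s) := by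
  rw [sub_nonneg]
  rcases le_total t s with h | h
  · rw [min_eq_left h]
    nlinarith [mul_le_mul_of_nonneg_right hρμ (mul_nonneg ht hs),
      mul_le_mul_of_nonneg_right hρu ht]
  · rw [min_eq_right h]
    nlinarith [mul_le_mul_of_nonneg_right hρμ (mul_nonneg hs hs),
      mul_le_mul_of_nonneg_right hρu hs, mul_le_mul_of_nonneg_left h (mul_nonneg hμ₁ hs)]

lemma corner_grad_snd_nonneg (hμ₁ : 0 ≤ μ₁) (hμ₁₂ : μ₁ ≤ μ₂) (hρu : ρ ≤ 1)
    (ht : 0 ≤ t) (hs : 0 ≤ s) :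
    0 ≤ t * (1 + μ₂ * s) - ρ * min t s * (1 + μ₁ * t) := by
  rw [sub_nonneg]
  have hρμ₁ : ρ * μ₁ ≤ μ₂ := (mul_le_of_le_one_left hμ₁ hρu).trans hμ₁₂
  rcases le_total t s with h | h
  · rw [min_eq_left h]
    nlinarith [mul_le_mul_of_nonneg_right hρμ₁ (mul_nonneg ht ht),
      mul_le_mul_of_nonneg_right hρu ht,
      mul_le_mul_of_nonneg_left h (mul_nonneg ht (hμ₁.trans hμ₁₂))]
  · rw [min_eq_right h]
    nlinarith [mul_le_mul_of_nonneg_right hρμ₁ (mul_nonneg hs ht),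
      mul_le_mul_of_nonneg_right hρu hs]

lemma quadF_corner_le (hμ₁ : 0 ≤ μ₁) (hμ₁₂ : μ₁ ≤ μ₂) (hρl : -1 < ρ) (hρu : ρ < 1)
    (hρμ : ρ * μ₂ ≤ μ₁) (ht : 0 < t) (hs : 0 < s) {x y : ℝ}
    (hx : 1 + μ₁ * t ≤ x) (hy : 1 + μ₂ * s ≤ y) :
    quadF ρ t s (1 + μ₁ * t) (1 + μ₂ * s) ≤ quadF ρ t s x y := by
  have hD := sq_mul_min_lt_mul hρl hρu ht hs
  rw [quadF_eq, quadF_eq]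
  refine div_le_div_of_nonneg_right ?_ (sub_nonneg.2 hD.le)
  exact binary_form_le_of_corner hs hD.le
    (corner_grad_fst_nonneg hμ₁ hρu.le hρμ ht.le hs.le)
    (corner_grad_snd_nonneg hμ₁ hμ₁₂ hρu.le ht.le hs.le) hx hy

end Corner

theorem stmt8 (μ₁ μ₂ ρ : ℝ) (hμ1 : 0 < μ₁) (hμ12 : μ₁ ≤ μ₂)
    (hρl : -1 < ρ) (hρu : ρ < 1) (hρμ : ρ * μ₂ ≤ μ₁) :
    ∀ t s : ℝ, 0 < t → 0 < s → gFun μ₁ μ₂ ρ t s = g3Fun μ₁ μ₂ ρ t s := by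
  intro t s ht hs
  refine IsLeast.csInf_eq ⟨⟨_, _, le_rfl, le_rfl, rfl⟩, ?_⟩
  rintro q ⟨x, y, hx, hy, rfl⟩
  exact quadF_corner_le hμ1.le hμ12 hρl hρu hρμ ht hs hx hy
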